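/- Fix b > 0 and β > 0 with b·β > 1, and let p₊(β) be the unique p ∈ (0,1) with p = tanh(b·β·p). Then the set of maximizers over [−1,1] of the function m ↦ b·m²/2 − β⁻¹·c(m) (equivalently, the set of minimizers of m ↦ F_{b,β}(0,m)) is exactly {−p₊(β), p₊(β)}. -/

import Mathlib

/-- The symmetrized entropy function
`c(m) = ((1+m)/2)·log((1+m)/2) + ((1−m)/2)·log((1−m)/2)` (with `c(±1) = 0`,
as `Real.log 0 = 0` in Lean). -/
noncomputable def cEnt (m : ℝ) : ℝ :=
  ((1 + m) / 2) * Real.log ((1 + m) / 2) + ((1 - m) / 2) * Real.log ((1 - m) / 2)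

lemma cEnt_neg (m : ℝ) : cEnt (-m) = cEnt m := by
  unfold cEnt
  ring_nf

lemma cEnt_continuous : Continuous cEnt := by
  have h1 : Continuous fun m : ℝ => (1 + m) / 2 := by continuity
  have h2 : Continuous fun m : ℝ => (1 - m) / 2 := by continuity
  exact (Real.continuous_mul_log.comp h1).add (Real.continuous_mul_log.comp h2)

lemma hasDerivAt_cEnt {m : ℝ} (h1 : -1 < m) (h2 : m < 1) :
    HasDerivAt cEnt ((Real.log (1 + m) - Real.log (1 - m)) / 2) m := by
  have hu : (0:ℝ) < 1 + m := by linarith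
  have hv : (0:ℝ) < 1 - m := by linarith
  have hu2 : (0:ℝ) < (1 + m) / 2 := by linarith
  have hv2 : (0:ℝ) < (1 - m) / 2 := by linarith
  have du : HasDerivAt (fun x : ℝ => (1 + x) / 2) (1 / 2) m := by
    simpa using ((hasDerivAt_id m).const_add 1).div_const 2
  have dv : HasDerivAt (fun x : ℝ => (1 - x) / 2) (-1 / 2) m := by
    simpa using ((hasDerivAt_id m).const_sub 1).div_const 2
  have dlu : HasDerivAt (fun x : ℝ => Real.log ((1 + x) / 2)) ((1 / 2) / ((1 + m) / 2)) m :=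
    du.log hu2.ne'
  have dlv : HasDerivAt (fun x : ℝ => Real.log ((1 - x) / 2)) (-1 / 2 / ((1 - m) / 2)) m :=
    dv.log hv2.ne'
  have := (du.mul dlu).add (dv.mul dlv)
  have heq : (1 / 2 * Real.log ((1 + m) / 2) + (1 + m) / 2 * (1 / 2 / ((1 + m) / 2))) +
      (-1 / 2 * Real.log ((1 - m) / 2) + (1 - m) / 2 * (-1 / 2 / ((1 - m) / 2)))
      = (Real.log (1 + m) - Real.log (1 - m)) / 2 := by
    rw [Real.log_div hu.ne' two_ne_zero, Real.log_div hv.ne' two_ne_zero]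
    field_simp
    ring
  rw [heq] at this
  exact this

/-- For `b·β > 1`, the set of maximizers over `[−1,1]` of
`m ↦ b·m²/2 − β⁻¹·c(m)` is exactly `{−p₊(β), p₊(β)}`. -/
theorem curie_weiss_maximizers
    (b β : ℝ) (hb : 0 < b) (hβ : 0 < β) (hbβ : 1 < b * β)
    (pPlus : ℝ) (hpPlus : pPlus ∈ Set.Ioo (0 : ℝ) 1)
    (hpPluseq : pPlus = Real.tanh (b * β * pPlus)) :
    {m ∈ Set.Icc (-1 : ℝ) 1 | ∀ m' ∈ Set.Icc (-1 : ℝ) 1,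
        b * m' ^ 2 / 2 - β⁻¹ * cEnt m' ≤ b * m ^ 2 / 2 - β⁻¹ * cEnt m}
      = {-pPlus, pPlus} := by
  obtain ⟨hp0, hp1⟩ := hpPlus
  set K := b * β with hK
  set p := pPlus with hp
  set f : ℝ → ℝ := fun m => b * m ^ 2 / 2 - β⁻¹ * cEnt m with hf
  set g : ℝ → ℝ := fun m => K * m - (Real.log (1 + m) - Real.log (1 - m)) / 2 with hg
  -- f is even
  have hfeven : ∀ m, f (-m) = f m := by
    intro m; simp only [hf]; rw [cEnt_neg]; ring
  -- log ratio identity at p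
  have hlogp : Real.log (1 + p) - Real.log (1 - p) = 2 * (K * p) := by
    set y := K * p with hy
    have hcosh : (0:ℝ) < Real.cosh y := Real.cosh_pos y
    have h1p : 1 + p = Real.exp y / Real.cosh y := by
      rw [hpPluseq, Real.tanh_eq_sinh_div_cosh]
      field_simp
      exact Real.cosh_add_sinh y
    have h2p : 1 - p = Real.exp (-y) / Real.cosh y := by
      rw [hpPluseq, Real.tanh_eq_sinh_div_cosh]
      field_simp
      exact Real.cosh_sub_sinh y
    rw [h1p, h2p, Real.log_div (Real.exp_pos _).ne' hcosh.ne',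
      Real.log_div (Real.exp_pos _).ne' hcosh.ne', Real.log_exp, Real.log_exp]
    ring
  have hg0 : g 0 = 0 := by simp [hg]
  have hgp : g p = 0 := by
    simp only [hg, hlogp]; ring
  -- derivative of g
  have hg' : ∀ x ∈ Set.Ioo (-1:ℝ) 1, HasDerivAt g (K - 1 / (1 - x ^ 2)) x := by
    rintro x ⟨hx1, hx2⟩
    have hu : (0:ℝ) < 1 + x := by linarith
    have hv : (0:ℝ) < 1 - x := by linarith
    have du : HasDerivAt (fun t : ℝ => 1 + t) 1 x := by
      simpa using (hasDerivAt_id x).const_add 1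
    have dv : HasDerivAt (fun t : ℝ => 1 - t) (-1) x := by
      simpa using (hasDerivAt_id x).const_sub 1
    have dlu : HasDerivAt (fun t : ℝ => Real.log (1 + t)) (1 / (1 + x)) x := by
      simpa using du.log hu.ne'
    have dlv : HasDerivAt (fun t : ℝ => Real.log (1 - t)) (-1 / (1 - x)) x := by
      simpa using dv.log hv.ne'
    have dK : HasDerivAt (fun t : ℝ => K * t) K x := by
      simpa using (hasDerivAt_id x).const_mul K
    have := dK.sub ((dlu.sub dlv).div_const 2)
    have heq : K - (1 / (1 + x) - -1 / (1 - x)) / 2 = K - 1 / (1 - x ^ 2) := by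
      have hx2' : (1:ℝ) - x ^ 2 = (1 + x) * (1 - x) := by ring
      rw [hx2']
      field_simp
      ring
    rw [heq] at this
    exact this
  -- g is continuous at points of (-1,1)
  have hgc : ∀ x ∈ Set.Ioo (-1:ℝ) 1, ContinuousAt g x := fun x hx => (hg' x hx).continuousAt
  -- Rolle: there is c ∈ (0,p) with derivative zero
  have hsub : Set.Icc (0:ℝ) p ⊆ Set.Ioo (-1:ℝ) 1 := fun x hx =>
    ⟨by linarith [hx.1], lt_of_le_of_lt hx.2 hp1⟩
  obtain ⟨c, hc, hc0⟩ := exists_hasDerivAt_eq_zero hp0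
    (fun x hx => (hgc x (hsub hx)).continuousWithinAt) (hg0.trans hgp.symm)
    (fun x hx => hg' x (hsub (Set.mem_Icc_of_Ioo hx)))
  have hc1 : c < 1 := lt_trans hc.2 hp1
  have hcpos : 0 < c := hc.1
  -- sign of g' : positive on (0,c), negative on (c,1)
  have hone : ∀ x : ℝ, -1 < x → x < 1 → 0 < 1 - x ^ 2 := by
    intro x h1 h2; nlinarith
  have hKc : K = 1 / (1 - c ^ 2) := by linarith [hc0]
  have hg'pos : ∀ x ∈ Set.Ioo (0:ℝ) c, 0 < K - 1 / (1 - x ^ 2) := by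
    rintro x ⟨hx0, hxc⟩
    have h1 : 0 < 1 - x ^ 2 := hone x (by linarith) (by linarith)
    have h2 : 0 < 1 - c ^ 2 := hone c (by linarith) hc1
    rw [hKc]
    rw [sub_pos, div_lt_div_iff₀ h1 h2]
    nlinarith
  have hg'neg : ∀ x ∈ Set.Ioo c (1:ℝ), K - 1 / (1 - x ^ 2) < 0 := by
    rintro x ⟨hxc, hx1⟩
    have h1 : 0 < 1 - x ^ 2 := hone x (by linarith) hx1
    have h2 : 0 < 1 - c ^ 2 := hone c (by linarith) hc1
    rw [hKc]
    rw [sub_neg, div_lt_div_iff₀ h2 h1]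
    nlinarith
  -- monotonicity of g
  have hgderiv : ∀ x ∈ Set.Ioo (-1:ℝ) 1, deriv g x = K - 1 / (1 - x ^ 2) :=
    fun x hx => (hg' x hx).deriv
  have hgmono : StrictMonoOn g (Set.Icc 0 c) := by
    apply strictMonoOn_of_deriv_pos (convex_Icc 0 c)
    · intro x hx
      exact (hgc x ⟨by linarith [hx.1], by linarith [hx.2]⟩).continuousWithinAt
    · intro x hx
      rw [interior_Icc] at hx
      rw [hgderiv x ⟨by linarith [hx.1], by linarith [hx.2]⟩]
      exact hg'pos x hx
  have hganti : ∀ z : ℝ, c < z → z < 1 → StrictAntiOn g (Set.Icc c z) := by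
    intro z hcz hz1
    apply strictAntiOn_of_deriv_neg (convex_Icc c z)
    · intro x hx
      exact (hgc x ⟨by linarith [hx.1], by linarith [hx.2]⟩).continuousWithinAt
    · intro x hx
      rw [interior_Icc] at hx
      rw [hgderiv x ⟨by linarith [hx.1], by linarith [hx.2]⟩]
      exact hg'neg x ⟨hx.1, by linarith [hx.2]⟩
  -- sign of g
  have hgpos : ∀ m ∈ Set.Ioo (0:ℝ) p, 0 < g m := by
    rintro m ⟨hm0, hmp⟩
    rcases le_or_gt m c with h | h
    · have := hgmono (Set.left_mem_Icc.2 hcpos.le) ⟨hm0.le, h⟩ hm0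
      rwa [hg0] at this
    · have := (hganti p hc.2 hp1) ⟨h.le, hmp.le⟩ (Set.right_mem_Icc.2 hc.2.le) hmp
      rwa [hgp] at this
  have hgneg : ∀ m ∈ Set.Ioo p (1:ℝ), g m < 0 := by
    rintro m ⟨hmp, hm1⟩
    have := (hganti m (lt_trans hc.2 hmp) hm1) ⟨hc.2.le, hmp.le⟩
      (Set.right_mem_Icc.2 (by linarith [hc.2])) hmp
    rwa [hgp] at this
  -- derivative of f
  have hf' : ∀ x ∈ Set.Ioo (-1:ℝ) 1, HasDerivAt f (β⁻¹ * g x) x := by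
    rintro x ⟨hx1, hx2⟩
    have d1 : HasDerivAt (fun t : ℝ => b * t ^ 2 / 2) (b * x) x := by
      have := ((hasDerivAt_pow 2 x).const_mul b).div_const 2
      simpa using this.congr_deriv (by ring)
    have := d1.sub ((hasDerivAt_cEnt hx1 hx2).const_mul β⁻¹)
    have heq : b * x - β⁻¹ * ((Real.log (1 + x) - Real.log (1 - x)) / 2) = β⁻¹ * g x := by
      simp only [hg, hK]
      field_simp
    rw [heq] at this
    exact this
  have hfc : Continuous f :=
    ((continuous_const.mul (continuous_pow 2)).div_const 2).sub
      (continuous_const.mul cEnt_continuous)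
  have hfderiv : ∀ x ∈ Set.Ioo (-1:ℝ) 1, deriv f x = β⁻¹ * g x :=
    fun x hx => (hf' x hx).deriv
  have hβinv : 0 < β⁻¹ := inv_pos.2 hβ
  -- f strictly increasing on [0,p], strictly decreasing on [p,1]
  have hfmono : StrictMonoOn f (Set.Icc 0 p) := by
    apply strictMonoOn_of_deriv_pos (convex_Icc 0 p) hfc.continuousOn
    intro x hx
    rw [interior_Icc] at hx
    rw [hfderiv x ⟨by linarith [hx.1], by linarith [hx.2, hp1]⟩]
    exact mul_pos hβinv (hgpos x hx)
  have hfanti : StrictAntiOn f (Set.Icc p 1) := by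
    apply strictAntiOn_of_deriv_neg (convex_Icc p 1) hfc.continuousOn
    intro x hx
    rw [interior_Icc] at hx
    rw [hfderiv x ⟨by linarith [hx.1], hx.2⟩]
    exact mul_neg_of_pos_of_neg hβinv (hgneg x hx)
  -- key: strict maximality
  have hkey0 : ∀ m ∈ Set.Icc (0:ℝ) 1, m ≠ p → f m < f p := by
    rintro m ⟨hm0, hm1⟩ hmp
    rcases lt_or_gt_of_ne hmp with h | h
    · exact hfmono ⟨hm0, h.le⟩ (Set.right_mem_Icc.2 hp0.le) h
    · exact hfanti (Set.left_mem_Icc.2 hp1.le) ⟨h.le, hm1⟩ h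
  have hkey : ∀ m ∈ Set.Icc (-1:ℝ) 1, m ≠ p → m ≠ -p → f m < f p := by
    rintro m ⟨hm0, hm1⟩ hmp hmnp
    rcases le_or_gt 0 m with h | h
    · exact hkey0 m ⟨h, hm1⟩ hmp
    · rw [← hfeven m]
      apply hkey0 (-m) ⟨by linarith, by linarith⟩
      intro hcon
      exact hmnp (by linarith [hcon])
  have hfp_eq : f (-p) = f p := hfeven p
  have hpIcc : p ∈ Set.Icc (-1:ℝ) 1 := ⟨by linarith, hp1.le⟩
  have hnpIcc : -p ∈ Set.Icc (-1:ℝ) 1 := ⟨by linarith, by linarith⟩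
  have hle : ∀ m' ∈ Set.Icc (-1:ℝ) 1, f m' ≤ f p := by
    intro m' hm'
    rcases eq_or_ne m' p with rfl | h1
    · exact le_refl _
    rcases eq_or_ne m' (-p) with rfl | h2
    · exact hfp_eq.le
    exact (hkey m' hm' h1 h2).le
  ext m
  simp only [Set.mem_setOf_eq, Set.mem_insert_iff, Set.mem_singleton_iff]
  constructor
  · rintro ⟨hmIcc, hm⟩
    by_contra hcon
    push_neg at hcon
    have h1 : f p ≤ f m := hm p hpIcc
    have h2 : f m < f p := hkey m hmIcc hcon.2 hcon.1
    linarith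
  · rintro (rfl | rfl)
    · exact ⟨hnpIcc, fun m' hm' => (hle m' hm').trans_eq hfp_eq.symm⟩
    · exact ⟨hpIcc, hle⟩
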